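/- arXiv:0712.3416 — 4 statements merged into one kernel-verified Lean document; each statement's English description precedes it below -/
import Mathlib

section
/- (Garsia–Rodemich–Rumsey inequality.) Let p and Ψ be strictly increasing continuous functions from [0,∞) to [0,∞) with p(0)=Ψ(0)=0 and Ψ(t)→∞ as t→∞, and let Ψ⁻¹ denote the inverse function of Ψ. Let T>0, let g:[0,T]→ℝ^d be continuous, and let B∈(0,∞) be such that the double integral over {(s,t)∈[0,T]²: s≠t} of Ψ(|g(t)−g(s)|/p(|t−s|)) with respect to Lebesgue measure ds dt is at most B. Then for all 0 ≤ s ≤ t ≤ T one has |g(t)−g(s)| ≤ 8·∫_{(0,t−s]} Ψ⁻¹(4B/u²) dμ_p(u), where μ_p denotes the Lebesgue–Stieltjes measure associated with the nondecreasing continuous function p (the right-hand side being interpreted in [0,∞], so the inequality is trivially true when that integral is infinite). -/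
open MeasureTheory Set Filter Topology Function
open scoped ENNReal

/-!
Write `I x = ∫_a^b Ψ(d(g x, g y) / p|y - x|) dy`, so that `∫_a^b I ≤ B`, and pick `c` with
`I c ≤ 2B/(b - a)`. Starting from `x₀ = c`, choose scales `δ` and points `x` descending to `a`
with `p δₙ₊₁ = p(xₙ - a)/2`, `xₙ₊₁ < a + δₙ₊₁`, `I xₙ₊₁ ≤ 2B/δₙ₊₁` and
`Ψ(d(g xₙ₊₁, g xₙ)/p(xₙ - xₙ₊₁)) ≤ 4B/(δₙ δₙ₊₁)`: on `(a, a + δₙ₊₁)` the averages of `I` and of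
`Ψ(d(g ·, g xₙ)/p(xₙ - ·))` are at most half of these bounds (the latter because
`I xₙ ≤ 2B/δₙ`), so some point satisfies both. Inverting `Ψ` and using `p δₙ₊₂ ≤ p δₙ₊₁ / 2`,
`d(g xₙ₊₁, g xₙ) ≤ Ψ⁻¹(4B/δₙ₊₁²) p(xₙ - a) ≤ 4 ∫_{(δₙ₊₂, δₙ₊₁]} Ψ⁻¹(4B/u²) dp(u)`. These
intervals are disjoint, so summing gives `d(g c, g a) ≤ 4 ∫_{(0, b-a]} Ψ⁻¹(4B/u²) dp(u)`, and
reflecting `[a, b]` gives the same bound for `d(g b, g c)`.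
-/

section Selection

variable {α : Type*} [MeasurableSpace α] {μ : Measure α} {s : Set α}

theorem exists_mem_le_of_setLIntegral_le (hs₀ : μ s ≠ 0) (hs : μ s ≠ ∞) {f : α → ℝ≥0∞}
    (hf : AEMeasurable f (μ.restrict s)) {c : ℝ≥0∞} (h : ∫⁻ x in s, f x ∂μ ≤ c * μ s) :
    ∃ x ∈ s, f x ≤ c := by
  obtain ⟨x, hx, hfx⟩ := exists_le_setLAverage hs₀ hs hf
  exact ⟨x, hx, hfx.trans (by rw [setLAverage_eq]; exact ENNReal.div_le_of_le_mul h)⟩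

theorem exists_mem_le_and_le_of_setLIntegral_le (hs₀ : μ s ≠ 0) (hs : μ s ≠ ∞)
    {f h : α → ℝ≥0∞} (hf : AEMeasurable f (μ.restrict s)) (hh : AEMeasurable h (μ.restrict s))
    {c c' : ℝ≥0∞} (hc₀ : c ≠ 0) (hc : c ≠ ∞) (hc'₀ : c' ≠ 0) (hc' : c' ≠ ∞)
    (hfs : ∫⁻ x in s, f x ∂μ ≤ c * μ s / 2) (hhs : ∫⁻ x in s, h x ∂μ ≤ c' * μ s / 2) :
    ∃ x ∈ s, f x ≤ c ∧ h x ≤ c' := by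
  have hsum : ∫⁻ x in s, (c⁻¹ * f x + c'⁻¹ * h x) ∂μ ≤ 1 * μ s := by
    rw [lintegral_add_left' (hf.const_mul _), lintegral_const_mul' _ _ (ENNReal.inv_ne_top.2 hc₀),
      lintegral_const_mul' _ _ (ENNReal.inv_ne_top.2 hc'₀), one_mul, ← ENNReal.add_halves (μ s)]
    rw [mul_div_assoc] at hfs hhs
    exact add_le_add ((ENNReal.inv_mul_le_iff hc₀ hc).2 hfs)
      ((ENNReal.inv_mul_le_iff hc'₀ hc').2 hhs)
  obtain ⟨x, hx, hle⟩ :=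
    exists_mem_le_of_setLIntegral_le hs₀ hs ((hf.const_mul _).add (hh.const_mul _)) hsum
  refine ⟨x, hx, ?_, ?_⟩
  · simpa [ENNReal.inv_mul_le_iff hc₀ hc] using le_of_add_le_left hle
  · simpa [ENNReal.inv_mul_le_iff hc'₀ hc'] using le_of_add_le_right hle

end Selection

theorem setLIntegral_Icc_comp_add_sub (f : ℝ → ℝ≥0∞) (a b : ℝ) :
    ∫⁻ x in Icc a b, f (a + b - x) = ∫⁻ x in Icc a b, f x := by
  have := (Measure.measurePreserving_sub_left volume (a + b)).setLIntegral_comp_preimage_emb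
    (Homeomorph.subLeft (a + b)).measurableEmbedding f (Icc a b)
  rwa [preimage_const_sub_Icc, add_sub_cancel_right, add_sub_cancel_left] at this

theorem ae_prod_fst_ne_snd {α : Type*} [MeasurableSpace α] [MeasurableEq α]
    [MeasurableSingletonClass α] (μ ν : Measure α) [SFinite ν] [NullSingletonClass ν] :
    ∀ᵐ q ∂μ.prod ν, q.1 ≠ q.2 := by
  simp only [ae_iff, ne_eq, not_not]
  rw [Measure.measure_prod_null (measurableSet_eq_fun measurable_fst measurable_snd)]
  exact .of_forall fun x => by simp [preimage]

section Inverse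

variable {Ψ Ψinv : ℝ → ℝ}

theorem StrictMonoOn.le_rightInv_of_apply_le (hΨ : StrictMonoOn Ψ (Ici 0))
    (hinv₀ : ∀ y, 0 ≤ y → 0 ≤ Ψinv y) (hinv : ∀ y, 0 ≤ y → Ψ (Ψinv y) = y) {x y : ℝ}
    (hx : 0 ≤ x) (hy : 0 ≤ y) (h : Ψ x ≤ y) : x ≤ Ψinv y := by
  rwa [← hΨ.le_iff_le hx (hinv₀ y hy), hinv y hy]

theorem StrictMonoOn.monotoneOn_rightInv (hΨ : StrictMonoOn Ψ (Ici 0))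
    (hinv₀ : ∀ y, 0 ≤ y → 0 ≤ Ψinv y) (hinv : ∀ y, 0 ≤ y → Ψ (Ψinv y) = y) :
    MonotoneOn Ψinv (Ici 0) := fun y hy z hz hyz =>
  hΨ.le_rightInv_of_apply_le hinv₀ hinv (hinv₀ y hy) hz (by rwa [hinv y hy])

end Inverse

theorem exists_mem_Ioo_apply_eq_half {p : ℝ → ℝ} (hp : Continuous p) (hp₀ : p 0 = 0) {t : ℝ}
    (ht : 0 ≤ t) (hpt : 0 < p t) : ∃ δ ∈ Ioo 0 t, p δ = p t / 2 :=
  intermediate_value_Ioo ht hp.continuousOn (by rw [hp₀]; constructor <;> linarith)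

theorem StrictMonoOn.tendsto_nhds_zero_of_tendsto_apply {p : ℝ → ℝ}
    (hp : StrictMonoOn p (Ici 0)) {ι : Type*} {l : Filter ι} {u : ι → ℝ} (hu : ∀ i, 0 ≤ u i)
    (h : Tendsto (fun i => p (u i)) l (𝓝 (p 0))) : Tendsto u l (𝓝 0) := by
  refine tendsto_order.2 ⟨fun ε hε => .of_forall fun i => hε.trans_le (hu i), fun ε hε => ?_⟩
  filter_upwards [h.eventually_lt_const (hp self_mem_Ici hε.le hε)] with i hi
  exact (hp.lt_iff_lt (hu i) hε.le).1 hi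

section Kernel

variable {X : Type*} [PseudoMetricSpace X]

noncomputable def grrKernel (p Ψ : ℝ → ℝ) (g : ℝ → X) (x y : ℝ) : ℝ≥0∞ :=
  ENNReal.ofReal (Ψ (dist (g y) (g x) / p |y - x|))

theorem measurable_grrKernel {p : StieltjesFunction ℝ} (hp : Continuous p) (hp₀ : p 0 = 0)
    {Ψ : ℝ → ℝ} (hΨ : MonotoneOn Ψ (Ici 0)) {g : ℝ → X} (hg : Continuous g) :
    Measurable (uncurry (grrKernel p Ψ g)) := by
  have hΨ' : Monotone fun t => Ψ (max t 0) := fun s t hst =>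
    hΨ (le_max_right s 0) (le_max_right t 0) (max_le_max_right 0 hst)
  have hq : Measurable fun q : ℝ × ℝ => dist (g q.2) (g q.1) / p |q.2 - q.1| :=
    (hg.comp continuous_snd).dist (hg.comp continuous_fst) |>.measurable.div
      (hp.comp (continuous_snd.sub continuous_fst).abs).measurable
  have : uncurry (grrKernel p Ψ g) =
      fun q => ENNReal.ofReal (Ψ (max (dist (g q.2) (g q.1) / p |q.2 - q.1|) 0)) := by
    ext q
    rw [max_eq_left (div_nonneg dist_nonneg (hp₀ ▸ p.mono (abs_nonneg _)))]
    rfl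
  rw [this]
  exact ENNReal.measurable_ofReal.comp (hΨ'.measurable.comp hq)

theorem grrKernel_comp_sub_left (p Ψ : ℝ → ℝ) (g : ℝ → X) (c x y : ℝ) :
    grrKernel p Ψ (fun z => g (c - z)) x y = grrKernel p Ψ g (c - x) (c - y) := by
  rw [grrKernel, grrKernel, abs_sub_comm (c - y), sub_sub_sub_cancel_left]

theorem dist_le_of_grrKernel_le {p Ψ Ψinv : ℝ → ℝ}
    (hΨ : StrictMonoOn Ψ (Ici 0)) (hinv₀ : ∀ y, 0 ≤ y → 0 ≤ Ψinv y)
    (hinv : ∀ y, 0 ≤ y → Ψ (Ψinv y) = y) {g : ℝ → X} {x y v : ℝ} (hp : 0 < p |y - x|)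
    (hv : 0 ≤ v) (h : grrKernel p Ψ g x y ≤ ENNReal.ofReal v) :
    dist (g y) (g x) ≤ Ψinv v * p |y - x| := by
  rw [← div_le_iff₀ hp]
  exact hΨ.le_rightInv_of_apply_le hinv₀ hinv (div_nonneg dist_nonneg hp.le) hv
    ((ENNReal.ofReal_le_ofReal_iff hv).1 h)

end Kernel

theorem exists_mem_Ioo_grr_step {K : ℝ → ℝ → ℝ≥0∞} (hK : Measurable (uncurry K)) {a b B : ℝ}
    (hB : 0 < B) (hI : ∫⁻ x in Icc a b, ∫⁻ y in Icc a b, K x y ≤ ENNReal.ofReal B)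
    {x δ δ' : ℝ} (hδ : 0 < δ) (hδ' : 0 < δ') (hb : a + δ' ≤ b)
    (hx : ∫⁻ y in Icc a b, K x y ≤ ENNReal.ofReal (2 * B / δ)) :
    ∃ y ∈ Ioo a (a + δ'), ∫⁻ z in Icc a b, K y z ≤ ENNReal.ofReal (2 * B / δ') ∧
      K x y ≤ ENNReal.ofReal (4 * B / (δ * δ')) := by
  have hsub : Ioo a (a + δ') ⊆ Icc a b := Ioo_subset_Icc_self.trans (Icc_subset_Icc_right hb)
  have hvol : volume (Ioo a (a + δ')) = ENNReal.ofReal δ' := by simp [Real.volume_Ioo]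
  have half_mul : ∀ c, 0 ≤ c →
      ENNReal.ofReal (2 * c / δ') * volume (Ioo a (a + δ')) / 2 = ENNReal.ofReal c := by
    intro c hc
    rw [hvol, ← ENNReal.ofReal_mul (by positivity), ← ENNReal.ofReal_ofNat 2,
      ← ENNReal.ofReal_div_of_pos two_pos]
    congr 1
    field_simp
  refine exists_mem_le_and_le_of_setLIntegral_le (μ := volume) (by simp [hvol, hδ'])
    (by simp [hvol])
    (hK.lintegral_prod_right' (ν := volume.restrict (Icc a b))).aemeasurable
    (hK.comp measurable_prodMk_left).aemeasurable (ENNReal.ofReal_pos.2 (by positivity)).ne'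
    ENNReal.ofReal_ne_top (ENNReal.ofReal_pos.2 (by positivity)).ne' ENNReal.ofReal_ne_top ?_ ?_
  · rw [half_mul B hB.le]
    exact (lintegral_mono_set hsub).trans hI
  · rw [show 4 * B / (δ * δ') = 2 * (2 * B / δ) / δ' by field_simp; ring,
      half_mul _ (by positivity)]
    exact (lintegral_mono_set hsub).trans hx

structure IsGRRDescent (p : ℝ → ℝ) (K : ℝ → ℝ → ℝ≥0∞) (a B : ℝ) (x δ : ℕ → ℝ) : Prop where
  lt_point : ∀ n, a < x n
  point_le : ∀ n, x n ≤ a + δ n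
  lt_sub : ∀ n, δ (n + 1) < x n - a
  two_mul_apply_succ : ∀ n, 2 * p (δ (n + 1)) = p (x n - a)
  kernel_le : ∀ n, K (x n) (x (n + 1)) ≤ ENNReal.ofReal (4 * B / (δ n * δ (n + 1)))

theorem exists_isGRRDescent {p : ℝ → ℝ} (hp : Continuous p) (hp_mono : StrictMonoOn p (Ici 0))
    (hp₀ : p 0 = 0) {K : ℝ → ℝ → ℝ≥0∞} (hK : Measurable (uncurry K)) {a b B : ℝ} (hB : 0 < B)
    (hI : ∫⁻ x in Icc a b, ∫⁻ y in Icc a b, K x y ≤ ENNReal.ofReal B) {c : ℝ} (hc : c ∈ Ioc a b)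
    (hIc : ∫⁻ y in Icc a b, K c y ≤ ENNReal.ofReal (2 * B / (b - a))) :
    ∃ x δ : ℕ → ℝ, x 0 = c ∧ IsGRRDescent p K a B x δ := by
  set Good : ℝ × ℝ → Prop := fun q =>
    a < q.1 ∧ q.1 ≤ b ∧ q.1 ≤ a + q.2 ∧ ∫⁻ y in Icc a b, K q.1 y ≤ ENNReal.ofReal (2 * B / q.2)
  have hstep : ∀ q, Good q → ∃ q', Good q' ∧ q'.2 < q.1 - a ∧ 2 * p q'.2 = p (q.1 - a) ∧
      K q.1 q'.1 ≤ ENNReal.ofReal (4 * B / (q.2 * q'.2)) := by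
    rintro ⟨x, δ⟩ ⟨hax, hxb, hxδ, hIx⟩
    obtain ⟨δ', ⟨hδ'₀, hδ'x⟩, hpδ'⟩ := exists_mem_Ioo_apply_eq_half hp hp₀ (sub_pos.2 hax).le
      (hp₀ ▸ hp_mono self_mem_Ici (sub_pos.2 hax).le (sub_pos.2 hax))
    obtain ⟨y, ⟨hay, hyδ'⟩, hIy, hKy⟩ :=
      exists_mem_Ioo_grr_step hK hB hI (by linarith) hδ'₀ (by linarith) hIx
    exact ⟨(y, δ'), ⟨hay, by linarith, hyδ'.le, hIy⟩, hδ'x, by linarith, hKy⟩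
  choose! next hgood hnext using hstep
  set u : ℕ → ℝ × ℝ := fun n => next^[n] (c, b - a)
  have hu_succ : ∀ n, u (n + 1) = next (u n) := fun n => iterate_succ_apply' next n _
  have hu : ∀ n, Good (u n) := by
    intro n
    induction n with
    | zero => exact ⟨hc.1, hc.2, by simp [u]; linarith [hc.2], hIc⟩
    | succ n ih => exact hu_succ n ▸ hgood _ ih
  refine ⟨fun n => (u n).1, fun n => (u n).2, rfl, fun n => (hu n).1, fun n => (hu n).2.2.1,
    fun n => ?_, fun n => ?_, fun n => ?_⟩ <;> simp only [hu_succ]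
  exacts [(hnext _ (hu n)).1, (hnext _ (hu n)).2.1, (hnext _ (hu n)).2.2]

namespace IsGRRDescent

section

variable {p : ℝ → ℝ} {K : ℝ → ℝ → ℝ≥0∞} {a B : ℝ} {x δ : ℕ → ℝ}

theorem pos (h : IsGRRDescent p K a B x δ) (n : ℕ) : 0 < δ n := by
  linarith [h.lt_point n, h.point_le n]

theorem antitone (h : IsGRRDescent p K a B x δ) : Antitone δ :=
  antitone_nat_of_succ_le fun n => by linarith [h.lt_sub n, h.point_le n]

theorem tendsto (h : IsGRRDescent p K a B x δ) (hp : StrictMonoOn p (Ici 0)) (hp₀ : p 0 = 0) :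
    Tendsto x atTop (𝓝 a) := by
  have hx : ∀ n, 0 ≤ x n - a := fun n => (sub_pos.2 (h.lt_point n)).le
  have hdecay : ∀ n, p (x (n + 1) - a) ≤ 2⁻¹ * p (x n - a) := fun n => by
    have : p (x (n + 1) - a) ≤ p (δ (n + 1)) :=
      hp.monotoneOn (hx _) (h.pos _).le (by linarith [h.point_le (n + 1)])
    linarith [h.two_mul_apply_succ n]
  have hgeom : Tendsto (fun n => (2⁻¹ : ℝ) ^ n * p (x 0 - a)) atTop (𝓝 0) := by
    simpa using (tendsto_pow_atTop_nhds_zero_of_lt_one (r := (2⁻¹ : ℝ)) (by norm_num)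
      (by norm_num)).mul_const (p (x 0 - a))
  have hpx : Tendsto (fun n => p (x n - a)) atTop (𝓝 0) :=
    squeeze_zero (fun n => hp₀ ▸ hp.monotoneOn self_mem_Ici (hx n) (hx n))
      (fun n => le_geom (u := fun n => p (x n - a)) (c := 2⁻¹) (by norm_num) n
        fun k _ => hdecay k) hgeom
  exact tendsto_sub_nhds_zero_iff.1 (hp.tendsto_nhds_zero_of_tendsto_apply hx (by rwa [hp₀]))

end

variable {X : Type*} [PseudoMetricSpace X] {p : StieltjesFunction ℝ} {Ψ Ψinv : ℝ → ℝ}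
  {g : ℝ → X} {a B : ℝ} {x δ : ℕ → ℝ}

theorem dist_succ_le (h : IsGRRDescent p (grrKernel p Ψ g) a B x δ)
    (hp : StrictMonoOn p (Ici 0)) (hp₀ : p 0 = 0) (hΨ : StrictMonoOn Ψ (Ici 0))
    (hinv₀ : ∀ y, 0 ≤ y → 0 ≤ Ψinv y) (hinv : ∀ y, 0 ≤ y → Ψ (Ψinv y) = y) (hB : 0 ≤ B)
    (n : ℕ) :
    dist (g (x (n + 1))) (g (x n)) ≤
      4 * Ψinv (4 * B / δ (n + 1) ^ 2) * (p (δ (n + 1)) - p (δ (n + 2))) := by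
  have ht : 0 < δ (n + 1) := h.pos _
  have htδ : δ (n + 1) ≤ δ n := h.antitone (Nat.le_succ _)
  have hδn : 0 < δ n := ht.trans_le htδ
  have hxx : x (n + 1) < x n := by linarith [h.point_le (n + 1), h.lt_sub n]
  have hpx : 0 < p |x (n + 1) - x n| :=
    hp₀ ▸ hp self_mem_Ici (mem_Ici.2 (abs_nonneg _)) (abs_pos.2 (sub_ne_zero.2 hxx.ne))
  have hK := dist_le_of_grrKernel_le hΨ hinv₀ hinv hpx (by positivity) (h.kernel_le n)
  have hΨinv : Ψinv (4 * B / (δ n * δ (n + 1))) ≤ Ψinv (4 * B / δ (n + 1) ^ 2) :=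
    hΨ.monotoneOn_rightInv hinv₀ hinv (mem_Ici.2 (by positivity)) (mem_Ici.2 (by positivity))
      (by rw [sq]; gcongr)
  have hp_le : p |x (n + 1) - x n| ≤ 4 * (p (δ (n + 1)) - p (δ (n + 2))) := by
    have h₁ : p |x (n + 1) - x n| ≤ p (x n - a) :=
      p.mono (by rw [abs_sub_comm, abs_of_pos (sub_pos.2 hxx)]; linarith [h.lt_point (n + 1)])
    have h₂ : p (x (n + 1) - a) ≤ p (δ (n + 1)) := p.mono (by linarith [h.point_le (n + 1)])
    linarith [h.two_mul_apply_succ n, h.two_mul_apply_succ (n + 1)]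
  calc dist (g (x (n + 1))) (g (x n))
      ≤ Ψinv (4 * B / δ (n + 1) ^ 2) * p |x (n + 1) - x n| := hK.trans (by gcongr)
    _ ≤ Ψinv (4 * B / δ (n + 1) ^ 2) * (4 * (p (δ (n + 1)) - p (δ (n + 2)))) :=
        mul_le_mul_of_nonneg_left hp_le (hinv₀ _ (by positivity))
    _ = _ := by ring

theorem edist_succ_le (h : IsGRRDescent p (grrKernel p Ψ g) a B x δ)
    (hp : StrictMonoOn p (Ici 0)) (hp₀ : p 0 = 0) (hΨ : StrictMonoOn Ψ (Ici 0))
    (hinv₀ : ∀ y, 0 ≤ y → 0 ≤ Ψinv y) (hinv : ∀ y, 0 ≤ y → Ψ (Ψinv y) = y) (hB : 0 ≤ B)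
    (n : ℕ) :
    edist (g (x (n + 1))) (g (x n)) ≤
      4 * ∫⁻ u in Ioc (δ (n + 2)) (δ (n + 1)), ENNReal.ofReal (Ψinv (4 * B / u ^ 2))
        ∂p.measure := by
  set s := δ (n + 2)
  set t := δ (n + 1)
  have hs : 0 < s := h.pos _
  have hinv_le : ∀ u ∈ Ioc s t, Ψinv (4 * B / t ^ 2) ≤ Ψinv (4 * B / u ^ 2) := fun u hu =>
    hΨ.monotoneOn_rightInv hinv₀ hinv (mem_Ici.2 (by positivity)) (mem_Ici.2 (by positivity))
      (by have := hs.trans hu.1; gcongr; exact hu.2)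
  have hinv_nonneg : 0 ≤ Ψinv (4 * B / t ^ 2) := hinv₀ _ (by positivity)
  calc edist (g (x (n + 1))) (g (x n))
      ≤ ENNReal.ofReal (4 * Ψinv (4 * B / t ^ 2) * (p t - p s)) := by
        rw [edist_dist]
        exact ENNReal.ofReal_le_ofReal (h.dist_succ_le hp hp₀ hΨ hinv₀ hinv hB n)
    _ = 4 * ∫⁻ _ in Ioc s t, ENNReal.ofReal (Ψinv (4 * B / t ^ 2)) ∂p.measure := by
        rw [setLIntegral_const, p.measure_Ioc,
          ENNReal.ofReal_mul (mul_nonneg zero_le_four hinv_nonneg),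
          ENNReal.ofReal_mul zero_le_four, ENNReal.ofReal_ofNat, mul_assoc]
    _ ≤ _ := by
        gcongr 4 * ?_
        exact setLIntegral_mono' measurableSet_Ioc fun u hu =>
          ENNReal.ofReal_le_ofReal (hinv_le u hu)

theorem edist_le_setLIntegral (h : IsGRRDescent p (grrKernel p Ψ g) a B x δ)
    (hp : StrictMonoOn p (Ici 0)) (hp₀ : p 0 = 0) (hΨ : StrictMonoOn Ψ (Ici 0))
    (hinv₀ : ∀ y, 0 ≤ y → 0 ≤ Ψinv y) (hinv : ∀ y, 0 ≤ y → Ψ (Ψinv y) = y) (hB : 0 ≤ B)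
    (hg : ContinuousWithinAt g (Ioi a) a) :
    edist (g (x 0)) (g a) ≤
      4 * ∫⁻ u in Ioc 0 (x 0 - a), ENNReal.ofReal (Ψinv (4 * B / u ^ 2)) ∂p.measure := by
  set J : ℕ → Set ℝ := fun n => Ioc (δ (n + 2)) (δ (n + 1))
  have hJ : ⋃ n, J n ⊆ Ioc 0 (x 0 - a) := iUnion_subset fun n =>
    Ioc_subset_Ioc (h.pos _).le ((h.antitone (by omega)).trans (h.lt_sub 0).le)
  have hdisj : Pairwise (Disjoint on J) :=
    (h.antitone.comp_monotone (add_left_mono (a := 1))).pairwise_disjoint_on_Ioc_succ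
  have hx : Tendsto x atTop (𝓝[>] a) :=
    tendsto_nhdsWithin_iff.2 ⟨h.tendsto hp hp₀, .of_forall h.lt_point⟩
  calc edist (g (x 0)) (g a)
      ≤ ∑' n, 4 * ∫⁻ u in J n, ENNReal.ofReal (Ψinv (4 * B / u ^ 2)) ∂p.measure :=
        edist_le_tsum_of_edist_le_of_tendsto₀ _
          (fun n => edist_comm (g (x n)) _ ▸ h.edist_succ_le hp hp₀ hΨ hinv₀ hinv hB n)
          (hg.tendsto.comp hx)
    _ ≤ _ := by
        rw [ENNReal.tsum_mul_left, ← lintegral_iUnion (fun _ => measurableSet_Ioc) hdisj]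
        gcongr 4 * ?_
        exact lintegral_mono_set hJ

end IsGRRDescent

section GRR

variable {X : Type*} [PseudoMetricSpace X] {p : StieltjesFunction ℝ} {Ψ Ψinv : ℝ → ℝ}
  {g : ℝ → X} {a b B : ℝ}

theorem edist_left_le_grr (hp : Continuous p) (hp_mono : StrictMonoOn p (Ici 0)) (hp₀ : p 0 = 0)
    (hΨ : StrictMonoOn Ψ (Ici 0)) (hinv₀ : ∀ y, 0 ≤ y → 0 ≤ Ψinv y)
    (hinv : ∀ y, 0 ≤ y → Ψ (Ψinv y) = y) (hg : Continuous g) (hB : 0 < B)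
    (hI : ∫⁻ x in Icc a b, ∫⁻ y in Icc a b, grrKernel p Ψ g x y ≤ ENNReal.ofReal B) {c : ℝ}
    (hc : c ∈ Ioc a b)
    (hIc : ∫⁻ y in Icc a b, grrKernel p Ψ g c y ≤ ENNReal.ofReal (2 * B / (b - a))) :
    edist (g c) (g a) ≤
      4 * ∫⁻ u in Ioc 0 (b - a), ENNReal.ofReal (Ψinv (4 * B / u ^ 2)) ∂p.measure := by
  obtain ⟨x, δ, rfl, h⟩ := exists_isGRRDescent hp hp_mono hp₀
    (measurable_grrKernel hp hp₀ hΨ.monotoneOn hg) hB hI hc hIc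
  refine (h.edist_le_setLIntegral hp_mono hp₀ hΨ hinv₀ hinv hB.le hg.continuousWithinAt).trans ?_
  gcongr 4 * ?_
  exact lintegral_mono_set (Ioc_subset_Ioc_right (by linarith [hc.2]))

theorem edist_le_grr_of_continuous (hp : Continuous p) (hp_mono : StrictMonoOn p (Ici 0))
    (hp₀ : p 0 = 0) (hΨ : StrictMonoOn Ψ (Ici 0)) (hinv₀ : ∀ y, 0 ≤ y → 0 ≤ Ψinv y)
    (hinv : ∀ y, 0 ≤ y → Ψ (Ψinv y) = y) (hg : Continuous g) (hab : a < b) (hB : 0 < B)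
    (hsq : ∫⁻ q in Icc a b ×ˢ Icc a b, grrKernel p Ψ g q.1 q.2 ≤ ENNReal.ofReal B) :
    edist (g b) (g a) ≤
      8 * ∫⁻ u in Ioc 0 (b - a), ENNReal.ofReal (Ψinv (4 * B / u ^ 2)) ∂p.measure := by
  have hK := measurable_grrKernel hp hp₀ hΨ.monotoneOn hg
  have hI : ∫⁻ x in Icc a b, ∫⁻ y in Icc a b, grrKernel p Ψ g x y ≤ ENNReal.ofReal B :=
    (setLIntegral_prod (μ := volume) (ν := volume) _ hK.aemeasurable).symm.trans_le hsq
  obtain ⟨c, hc, hIc⟩ := exists_mem_le_of_setLIntegral_le (μ := volume) (s := Ioo a b)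
    (c := ENNReal.ofReal (2 * B / (b - a))) (by simp [hab]) (by simp)
    (hK.lintegral_prod_right' (ν := volume.restrict (Icc a b))).aemeasurable (by
      rw [Real.volume_Ioo, ← ENNReal.ofReal_mul (by positivity),
        div_mul_cancel₀ _ (sub_pos.2 hab).ne']
      exact (lintegral_mono_set Ioo_subset_Icc_self).trans
        (hI.trans (ENNReal.ofReal_le_ofReal (by linarith))))
  set g' := fun z => g (a + b - z)
  have hg' : Continuous g' := hg.comp (by fun_prop)
  have hrefl : ∀ x, ∫⁻ y in Icc a b, grrKernel p Ψ g' x y =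
      ∫⁻ y in Icc a b, grrKernel p Ψ g (a + b - x) y := fun x => by
    simp_rw [g', grrKernel_comp_sub_left]
    exact setLIntegral_Icc_comp_add_sub (grrKernel p Ψ g (a + b - x)) a b
  have hI' : ∫⁻ x in Icc a b, ∫⁻ y in Icc a b, grrKernel p Ψ g' x y ≤ ENNReal.ofReal B := by
    simp_rw [hrefl]
    rwa [setLIntegral_Icc_comp_add_sub (fun x => ∫⁻ y in Icc a b, grrKernel p Ψ g x y)]
  have hleft := edist_left_le_grr hp hp_mono hp₀ hΨ hinv₀ hinv hg hB hI ⟨hc.1, hc.2.le⟩ hIc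
  have hright := edist_left_le_grr hp hp_mono hp₀ hΨ hinv₀ hinv hg' hB hI' (c := a + b - c)
    ⟨by linarith [hc.2], by linarith [hc.1]⟩ (by rwa [hrefl, sub_sub_cancel])
  simp only [g', sub_sub_cancel, add_sub_cancel_left] at hright
  calc edist (g b) (g a) ≤ edist (g c) (g b) + edist (g c) (g a) :=
        edist_comm (g b) (g c) ▸ edist_triangle _ _ _
    _ ≤ _ := by rw [show (8 : ℝ≥0∞) = 4 + 4 by norm_num, add_mul]; exact add_le_add hright hleft

theorem edist_le_grr (hp : Continuous p) (hp_mono : StrictMonoOn p (Ici 0)) (hp₀ : p 0 = 0)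
    (hΨ : StrictMonoOn Ψ (Ici 0)) (hinv₀ : ∀ y, 0 ≤ y → 0 ≤ Ψinv y)
    (hinv : ∀ y, 0 ≤ y → Ψ (Ψinv y) = y) (hg : ContinuousOn g (Icc a b)) (hab : a ≤ b)
    (hB : 0 < B) (hsq : ∫⁻ q in Icc a b ×ˢ Icc a b, grrKernel p Ψ g q.1 q.2 ≤ ENNReal.ofReal B) :
    edist (g b) (g a) ≤
      8 * ∫⁻ u in Ioc 0 (b - a), ENNReal.ofReal (Ψinv (4 * B / u ^ 2)) ∂p.measure := by
  rcases hab.eq_or_lt with rfl | hab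
  · simp
  set g' := fun z => g (projIcc a b hab.le z)
  have hg' : Continuous g' :=
    hg.comp_continuous (continuous_subtype_val.comp continuous_projIcc) fun z => (projIcc a b _ z).2
  have heq : ∀ z ∈ Icc a b, g' z = g z := fun z hz => by simp [g', projIcc_of_mem _ hz]
  have hsq' : ∫⁻ q in Icc a b ×ˢ Icc a b, grrKernel p Ψ g' q.1 q.2 ≤ ENNReal.ofReal B := by
    refine (setLIntegral_congr_fun (measurableSet_Icc.prod measurableSet_Icc)
      fun q hq => ?_).trans_le hsq
    simp only [grrKernel, heq _ hq.1, heq _ hq.2]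
  have := edist_le_grr_of_continuous hp hp_mono hp₀ hΨ hinv₀ hinv hg' hab hB hsq'
  rwa [heq a (left_mem_Icc.2 hab.le), heq b (right_mem_Icc.2 hab.le)] at this

end GRR

theorem stmt_0_general {d : ℕ} (p : StieltjesFunction ℝ) (Ψ Ψinv : ℝ → ℝ)
    (hp_cont : Continuous p) (hp_mono : StrictMonoOn p (Ici 0)) (hp0 : p 0 = 0)
    (hΨ_mono : StrictMonoOn Ψ (Ici 0))
    (hΨinv_nonneg : ∀ y, 0 ≤ y → 0 ≤ Ψinv y)
    (hΨinv_right : ∀ y, 0 ≤ y → Ψ (Ψinv y) = y)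
    (T : ℝ) (g : ℝ → EuclideanSpace ℝ (Fin d))
    (hg : ContinuousOn g (Icc 0 T)) (B : ℝ) (hB : 0 < B)
    (hbound : ∫⁻ st in {st : ℝ × ℝ | st.1 ∈ Icc 0 T ∧ st.2 ∈ Icc 0 T ∧ st.1 ≠ st.2},
        ENNReal.ofReal (Ψ (‖g st.2 - g st.1‖ / p |st.2 - st.1|)) ≤ ENNReal.ofReal B) :
    ∀ s t : ℝ, 0 ≤ s → s ≤ t → t ≤ T →
      ENNReal.ofReal ‖g t - g s‖ ≤
        8 * ∫⁻ u in Ioc 0 (t - s), ENNReal.ofReal (Ψinv (4 * B / u ^ 2)) ∂p.measure := by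
  intro s t hs hst htT
  have hsq : ∫⁻ q in Icc s t ×ˢ Icc s t, grrKernel p Ψ g q.1 q.2 ≤ ENNReal.ofReal B := by
    refine (lintegral_mono_set' ?_).trans hbound
    filter_upwards [(ae_prod_fst_ne_snd volume volume : ∀ᵐ q : ℝ × ℝ, q.1 ≠ q.2)] with q hq hmem
    exact ⟨Icc_subset_Icc hs htT hmem.1, Icc_subset_Icc hs htT hmem.2, hq⟩
  have := edist_le_grr hp_cont hp_mono hp0 hΨ_mono hΨinv_nonneg hΨinv_right
    (hg.mono (Icc_subset_Icc hs htT)) hst hB hsq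
  rwa [edist_dist, dist_eq_norm] at this

/-- **Garsia–Rodemich–Rumsey inequality.** If `p, Ψ` are strictly increasing continuous
functions on `[0,∞)` vanishing at `0`, with `Ψ → ∞` and inverse `Ψinv`, `g` is continuous on
`[0,T]` with values in `ℝ^d`, and the double integral of `Ψ(‖g t − g s‖ / p |t−s|)` over
`{(s,t) ∈ [0,T]² : s ≠ t}` is at most `B`, then for all `0 ≤ s ≤ t ≤ T`,
`‖g t − g s‖ ≤ 8 ∫_{(0,t−s]} Ψ⁻¹(4B/u²) dμ_p` (interpreted in `[0,∞]`). -/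
theorem stmt_0 {d : ℕ} (p : StieltjesFunction ℝ) (Ψ Ψinv : ℝ → ℝ)
    (hp_cont : Continuous p) (hp_mono : StrictMonoOn p (Ici 0)) (hp0 : p 0 = 0)
    (hΨ_cont : ContinuousOn Ψ (Ici 0)) (hΨ_mono : StrictMonoOn Ψ (Ici 0))
    (hΨ0 : Ψ 0 = 0) (hΨ_top : Filter.Tendsto Ψ Filter.atTop Filter.atTop)
    (hΨinv_nonneg : ∀ y, 0 ≤ y → 0 ≤ Ψinv y)
    (hΨinv_left : ∀ x, 0 ≤ x → Ψinv (Ψ x) = x)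
    (hΨinv_right : ∀ y, 0 ≤ y → Ψ (Ψinv y) = y)
    (T : ℝ) (hT : 0 < T) (g : ℝ → EuclideanSpace ℝ (Fin d))
    (hg : ContinuousOn g (Icc 0 T)) (B : ℝ) (hB : 0 < B)
    (hbound : ∫⁻ st in {st : ℝ × ℝ | st.1 ∈ Icc 0 T ∧ st.2 ∈ Icc 0 T ∧ st.1 ≠ st.2},
        ENNReal.ofReal (Ψ (‖g st.2 - g st.1‖ / p |st.2 - st.1|)) ≤ ENNReal.ofReal B) :
    ∀ s t : ℝ, 0 ≤ s → s ≤ t → t ≤ T →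
      ENNReal.ofReal ‖g t - g s‖ ≤
        8 * ∫⁻ u in Ioc 0 (t - s), ENNReal.ofReal (Ψinv (4 * B / u ^ 2)) ∂p.measure :=
  stmt_0_general p Ψ Ψinv hp_cont hp_mono hp0 hΨ_mono hΨinv_nonneg hΨinv_right T g hg B hB hbound
end

section
/- Let W and H be real Hilbert spaces, P : W → H a bounded linear map with adjoint P*, and B : W × W → ℝ a bounded, symmetric, coercive bilinear form represented by the invertible bounded operator T : W → W (⟨Tu,v⟩_W = B(u,v)). Suppose in addition that for some λ>0 one has B(u,u) ≥ λ‖Pu‖²_H for all u∈W. Then the operator R = P ∘ T⁻¹ ∘ P* : H → H satisfies λ‖Rφ‖_H ≤ ‖φ‖_H for every φ∈H; that is, λR is a contraction of H. -/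
theorem mul_norm_le_norm_of_mul_norm_sq_le_inner {H : Type*} [NormedAddCommGroup H]
    [InnerProductSpace ℝ H] {lam : ℝ} {x y : H} (h : lam * ‖x‖ ^ 2 ≤ inner ℝ y x) :
    lam * ‖x‖ ≤ ‖y‖ := by
  have hCS : lam * ‖x‖ * ‖x‖ ≤ ‖y‖ * ‖x‖ := by
    calc lam * ‖x‖ * ‖x‖ = lam * ‖x‖ ^ 2 := by ring
      _ ≤ inner ℝ y x := h
      _ ≤ ‖y‖ * ‖x‖ := real_inner_le_norm y x
  rcases (norm_nonneg x).eq_or_lt with hx | hx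
  · rw [← hx, mul_zero]
    exact norm_nonneg y
  · exact le_of_mul_le_mul_right hCS hx

theorem stmt_6_general {W H : Type*}
    [NormedAddCommGroup W] [InnerProductSpace ℝ W] [CompleteSpace W]
    [NormedAddCommGroup H] [InnerProductSpace ℝ H] [CompleteSpace H]
    (P : W →L[ℝ] H) (B : W → W → ℝ) (T Tinv : W →L[ℝ] W)
    (hT : ∀ u v : W, (inner ℝ (T u) v : ℝ) = B u v)
    (hTinv_right : ∀ u, T (Tinv u) = u)
    (lam : ℝ)
    (hPcoer : ∀ u : W, lam * ‖P u‖ ^ 2 ≤ B u u) :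
    ∀ φ : H, lam * ‖P (Tinv ((ContinuousLinearMap.adjoint P) φ))‖ ≤ ‖φ‖ := by
  intro φ
  set u := Tinv (ContinuousLinearMap.adjoint P φ)
  apply mul_norm_le_norm_of_mul_norm_sq_le_inner
  calc lam * ‖P u‖ ^ 2 ≤ B u u := hPcoer u
    _ = inner ℝ (T u) u := (hT u u).symm
    _ = inner ℝ φ (P u) := by
      rw [hTinv_right, ContinuousLinearMap.adjoint_inner_left]

/-- Abstract contraction property of the boundary resolvent: if the bounded, symmetric,
coercive bilinear form `B` represented by the invertible operator `T` also satisfies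
`B(u,u) ≥ λ‖Pu‖²`, then the operator `R = P ∘ T⁻¹ ∘ P*` satisfies `λ‖Rφ‖ ≤ ‖φ‖` for
every `φ`, i.e. `λR` is a contraction. -/
theorem stmt_6 {W H : Type*}
    [NormedAddCommGroup W] [InnerProductSpace ℝ W] [CompleteSpace W]
    [NormedAddCommGroup H] [InnerProductSpace ℝ H] [CompleteSpace H]
    (P : W →L[ℝ] H) (B : W → W → ℝ) (T Tinv : W →L[ℝ] W)
    (hT : ∀ u v : W, (inner ℝ (T u) v : ℝ) = B u v)
    (hsymm : ∀ u v : W, B u v = B v u)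
    (c : ℝ) (hc : 0 < c) (hcoer : ∀ u : W, c * ‖u‖ ^ 2 ≤ B u u)
    (hTinv_left : ∀ u, Tinv (T u) = u) (hTinv_right : ∀ u, T (Tinv u) = u)
    (lam : ℝ) (hlam : 0 < lam)
    (hPcoer : ∀ u : W, lam * ‖P u‖ ^ 2 ≤ B u u) :
    ∀ φ : H, lam * ‖P (Tinv ((ContinuousLinearMap.adjoint P) φ))‖ ≤ ‖φ‖ :=
  stmt_6_general P B T Tinv hT hTinv_right lam hPcoer
end

section
/- Let H be a real Hilbert space and let (R_λ)_{λ>0} be a family of bounded self-adjoint linear operators on H satisfying: (i) the resolvent identity (λ−μ)R_λR_μ = R_μ − R_λ for all λ,μ>0, and (ii) λ‖R_λφ‖² ≤ ⟨R_λφ, φ⟩ for all λ>0 and φ∈H. Let K = {ψ ∈ H : λR_λψ = ψ for all λ>0}, a closed linear subspace of H, and let P_K denote the orthogonal projection of H onto K. Then for every φ ∈ H, λR_λφ converges strongly to P_K φ as λ → 0⁺: ‖λR_λφ − P_K φ‖ → 0. -/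
/-!
By the energy bound each `λR_λ` is a contraction, and the resolvent identity gives
`λR_λ(φ - μR_μφ) = λ/(λ-μ) • (λR_λφ - μR_μφ) = O(λ)`; hence `λR_λ → 0` strongly on the closed
span of the ranges of `1 - μR_μ`. By self-adjointness the orthogonal complement of that span is
the common fixed space `K`, so `φ - P_K φ` lies in the span, while `λR_λ` fixes `P_K φ`.
-/

open Filter Topology

section TendstoZero

variable {ι 𝕜 E F : Type*} [NontriviallyNormedField 𝕜] [SeminormedAddCommGroup E]
  [NormedSpace 𝕜 E] [SeminormedAddCommGroup F] [NormedSpace 𝕜 F]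

def tendstoZeroSubmodule (T : ι → E →L[𝕜] F) (l : Filter ι) : Submodule 𝕜 E where
  carrier := {x | Tendsto (fun i => T i x) l (𝓝 0)}
  add_mem' hx hy := by simpa using hx.add hy
  zero_mem' := by simpa using tendsto_const_nhds (x := (0 : F)) (f := l)
  smul_mem' c _ hx := by simpa using hx.const_smul c

theorem mem_tendstoZeroSubmodule {T : ι → E →L[𝕜] F} {l : Filter ι} {x : E} :
    x ∈ tendstoZeroSubmodule T l ↔ Tendsto (fun i => T i x) l (𝓝 0) :=
  Iff.rfl

theorem isClosed_tendstoZeroSubmodule {T : ι → E →L[𝕜] F} {l : Filter ι} {C : ℝ}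
    (hT : ∀ᶠ i in l, ‖T i‖ ≤ C) : IsClosed (tendstoZeroSubmodule T l : Set E) := by
  refine isClosed_of_closure_subset fun x hx => Metric.tendsto_nhds.2 fun ε hε => ?_
  have hC : 0 < |C| + 1 := by positivity
  obtain ⟨y, hy, hxy⟩ := Metric.mem_closure_iff.1 hx (ε / 2 / (|C| + 1)) (by positivity)
  have hxy' : (|C| + 1) * ‖x - y‖ < ε / 2 := by
    rw [← dist_eq_norm]
    exact (lt_div_iff₀' hC).1 hxy
  filter_upwards [hT, Metric.tendsto_nhds.1 hy (ε / 2) (half_pos hε)] with i hTi hyi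
  rw [dist_zero_right] at hyi ⊢
  calc ‖T i x‖ = ‖T i (x - y) + T i y‖ := by rw [← map_add, sub_add_cancel]
    _ ≤ C * ‖x - y‖ + ‖T i y‖ := by
      grw [norm_add_le, (T i).le_of_opNorm_le hTi]
    _ ≤ (|C| + 1) * ‖x - y‖ + ‖T i y‖ := by gcongr; linarith [le_abs_self C]
    _ < ε := by linarith

end TendstoZero

theorem smul_map_sub_smul_eq_of_resolvent {𝕜 V F : Type*} [Field 𝕜] [AddCommGroup V]
    [Module 𝕜 V] [FunLike F V V] [LinearMapClass F 𝕜 V V] (P : F) {lam mu : 𝕜} (hne : lam ≠ mu)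
    {φ q : V}
    (h : (lam - mu) • P q = q - P φ) :
    lam • P (φ - mu • q) = (lam / (lam - mu)) • (lam • P φ - mu • q) := by
  have hP : P q = (lam - mu)⁻¹ • (q - P φ) := by
    rw [← h, smul_smul, inv_mul_cancel₀ (sub_ne_zero.2 hne), one_smul]
  rw [map_sub, map_smul, hP]
  match_scalars <;> field_simp [sub_ne_zero.2 hne]
  ring

section Resolvent

variable {H : Type*} [NormedAddCommGroup H] [InnerProductSpace ℝ H]

theorem norm_smul_le_of_mul_norm_sq_le_inner {u φ : H} {lam : ℝ} (hlam : 0 ≤ lam)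
    (h : lam * ‖u‖ ^ 2 ≤ inner ℝ u φ) : ‖lam • u‖ ≤ ‖φ‖ := by
  rw [norm_smul, Real.norm_of_nonneg hlam]
  rcases (norm_nonneg u).eq_or_lt with hu | hu
  · simp [← hu]
  · refine le_of_mul_le_mul_right ?_ hu
    nlinarith [real_inner_le_norm u φ]

theorem ContinuousLinearMap.opNorm_smul_le_one_of_mul_norm_sq_le_inner {T : H →L[ℝ] H} {lam : ℝ}
    (hlam : 0 ≤ lam) (h : ∀ φ, lam * ‖T φ‖ ^ 2 ≤ inner ℝ (T φ) φ) : ‖lam • T‖ ≤ 1 :=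
  ContinuousLinearMap.opNorm_le_bound _ zero_le_one fun φ => by
    simpa using norm_smul_le_of_mul_norm_sq_le_inner hlam (h φ)

variable {R : ℝ → H →L[ℝ] H}

theorem tendsto_smul_apply_sub_smul_apply
    (hres : ∀ lam mu : ℝ, 0 < lam → 0 < mu → ∀ φ : H,
      (lam - mu) • R lam (R mu φ) = R mu φ - R lam φ)
    (hbnd : ∀ lam : ℝ, 0 < lam → ∀ φ : H,
      lam * ‖R lam φ‖ ^ 2 ≤ (inner ℝ (R lam φ) φ : ℝ))
    {mu : ℝ} (hmu : 0 < mu) (φ : H) :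
    Tendsto (fun lam => lam • R lam (φ - mu • R mu φ)) (𝓝[>] 0) (𝓝 0) := by
  have hcont : ContinuousAt (fun lam : ℝ => lam / (mu - lam) * (2 * ‖φ‖)) 0 :=
    (continuousAt_id.div (continuousAt_const.sub continuousAt_id) (by simpa using hmu.ne')).mul
      continuousAt_const
  refine squeeze_zero_norm' ?_ (by simpa using hcont.tendsto.mono_left nhdsWithin_le_nhds)
  filter_upwards [Ioo_mem_nhdsGT hmu] with lam ⟨hlam, hlam_mu⟩
  have hcontr : ∀ t, 0 < t → ‖t • R t φ‖ ≤ ‖φ‖ := fun t ht =>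
    norm_smul_le_of_mul_norm_sq_le_inner ht.le (hbnd t ht φ)
  rw [smul_map_sub_smul_eq_of_resolvent (R lam) hlam_mu.ne (hres lam mu hlam hmu φ),
    norm_smul, Real.norm_eq_abs, abs_div, abs_of_pos hlam, abs_of_neg (sub_neg.2 hlam_mu), neg_sub]
  refine mul_le_mul_of_nonneg_left ?_ (div_nonneg hlam.le (sub_pos.2 hlam_mu).le)
  calc ‖lam • R lam φ - mu • R mu φ‖ ≤ ‖φ‖ + ‖φ‖ :=
        (norm_sub_le _ _).trans (add_le_add (hcontr lam hlam) (hcontr mu hmu))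
    _ = 2 * ‖φ‖ := by ring

theorem topologicalClosure_iSup_range_le_tendstoZeroSubmodule
    (hres : ∀ lam mu : ℝ, 0 < lam → 0 < mu → ∀ φ : H,
      (lam - mu) • R lam (R mu φ) = R mu φ - R lam φ)
    (hbnd : ∀ lam : ℝ, 0 < lam → ∀ φ : H,
      lam * ‖R lam φ‖ ^ 2 ≤ (inner ℝ (R lam φ) φ : ℝ)) :
    (⨆ mu > 0, (1 - mu • R mu).range).topologicalClosure ≤
      tendstoZeroSubmodule (fun lam => lam • R lam) (𝓝[>] 0) := by
  refine Submodule.topologicalClosure_minimal _ (iSup₂_le fun mu hmu => ?_)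
    (isClosed_tendstoZeroSubmodule (C := 1) ?_)
  · rintro _ ⟨φ, rfl⟩
    simpa only [mem_tendstoZeroSubmodule, ContinuousLinearMap.coe_coe, sub_apply, one_apply_eq_self,
      smul_apply]
      using tendsto_smul_apply_sub_smul_apply hres hbnd hmu φ
  · filter_upwards [self_mem_nhdsWithin] with lam hlam
    exact ContinuousLinearMap.opNorm_smul_le_one_of_mul_norm_sq_le_inner hlam.le (hbnd lam hlam)

variable (R) in
def fixedSubmodule : Submodule ℝ H :=
  ⨅ mu > 0, (1 - mu • R mu).ker

theorem mem_fixedSubmodule {ψ : H} :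
    ψ ∈ fixedSubmodule R ↔ ∀ lam : ℝ, 0 < lam → lam • R lam ψ = ψ := by
  simp only [fixedSubmodule, Submodule.mem_iInf, LinearMap.mem_ker,
    ContinuousLinearMap.coe_coe, sub_apply, one_apply_eq_self, smul_apply, sub_eq_zero,
    eq_comm (a := ψ)]

theorem orthogonal_iSup_range_eq_fixedSubmodule
    (hsa : ∀ lam : ℝ, 0 < lam → ∀ φ ψ : H, (inner ℝ (R lam φ) ψ : ℝ) = inner ℝ φ (R lam ψ)) :
    (⨆ mu > 0, (1 - mu • R mu).range)ᗮ = fixedSubmodule R := by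
  rw [(Submodule.orthogonal_gc ℝ H).l_iSup₂]
  refine iInf_congr fun mu => iInf_congr fun hmu =>
    LinearMap.IsSymmetric.orthogonal_range fun φ ψ => ?_
  simp [inner_sub_left, inner_sub_right, real_inner_smul_left, real_inner_smul_right, hsa mu hmu]

end Resolvent

/-- Abstract ergodic property of the boundary resolvent family: if `(R_λ)_{λ>0}` is a family
of bounded self-adjoint operators on a real Hilbert space satisfying the resolvent identity
and `λ‖R_λφ‖² ≤ ⟨R_λφ,φ⟩`, then for every `φ`, `λR_λφ` converges strongly as `λ → 0⁺` to the
orthogonal projection of `φ` onto the common fixed subspace `K = {ψ : λR_λψ = ψ ∀λ>0}`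
(characterized by: the limit `ψ` lies in `K` and `φ − ψ ⊥ K`). -/
theorem stmt_8 {H : Type*} [NormedAddCommGroup H] [InnerProductSpace ℝ H] [CompleteSpace H]
    (R : ℝ → H →L[ℝ] H)
    (hsa : ∀ lam : ℝ, 0 < lam → ∀ φ ψ : H, (inner ℝ (R lam φ) ψ : ℝ) = inner ℝ φ (R lam ψ))
    (hres : ∀ lam mu : ℝ, 0 < lam → 0 < mu → ∀ φ : H,
      (lam - mu) • R lam (R mu φ) = R mu φ - R lam φ)
    (hbnd : ∀ lam : ℝ, 0 < lam → ∀ φ : H,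
      lam * ‖R lam φ‖ ^ 2 ≤ (inner ℝ (R lam φ) φ : ℝ)) :
    ∀ φ : H, ∃ ψ : H, (∀ lam : ℝ, 0 < lam → lam • R lam ψ = ψ) ∧
      (∀ χ : H, (∀ lam : ℝ, 0 < lam → lam • R lam χ = χ) → (inner ℝ (φ - ψ) χ : ℝ) = 0) ∧
      Tendsto (fun lam : ℝ => lam • R lam φ) (nhdsWithin 0 (Set.Ioi 0)) (nhds ψ) := by
  intro φ
  have hK := orthogonal_iSup_range_eq_fixedSubmodule hsa
  have : CompleteSpace (fixedSubmodule R) := hK ▸ inferInstance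
  set ψ := (fixedSubmodule R).starProjection φ
  have hψ : ∀ lam : ℝ, 0 < lam → lam • R lam ψ = ψ :=
    mem_fixedSubmodule.1 ((fixedSubmodule R).starProjection_apply_mem φ)
  have hperp : φ - ψ ∈ (fixedSubmodule R)ᗮ :=
    (fixedSubmodule R).sub_starProjection_mem_orthogonal φ
  have hlim : Tendsto (fun lam : ℝ => lam • R lam (φ - ψ)) (𝓝[>] 0) (𝓝 0) := by
    refine topologicalClosure_iSup_range_le_tendstoZeroSubmodule hres hbnd ?_
    rwa [← Submodule.orthogonal_orthogonal_eq_closure, hK]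
  refine ⟨ψ, hψ, fun χ hχ => (fixedSubmodule R).inner_left_of_mem_orthogonal
    (mem_fixedSubmodule.2 hχ) hperp, ?_⟩
  have hsplit : ∀ᶠ lam in 𝓝[>] 0, ψ + lam • R lam (φ - ψ) = lam • R lam φ := by
    filter_upwards [self_mem_nhdsWithin] with lam hlam
    rw [map_sub, smul_sub, hψ lam hlam, add_sub_cancel]
  simpa using (tendsto_const_nhds.add hlim).congr' hsplit
end

section
/- Let T > 0. Let x_n, x : [0,T] → ℝ be continuous functions with x_n → x uniformly on [0,T], and let v_n, v : [0,T] → ℝ be continuous nondecreasing functions with v_n → v uniformly on [0,T]. For a continuous nondecreasing w : [0,T] → ℝ let μ_w denote its Lebesgue–Stieltjes measure (extending w constantly outside [0,T]). Then sup_{t∈[0,T]} | ∫_{(0,t]} x_n dμ_{v_n} − ∫_{(0,t]} x dμ_v | → 0 as n → ∞; in particular the functions t ↦ ∫_{(0,t]} x_n dμ_{v_n} converge uniformly on [0,T] to t ↦ ∫_{(0,t]} x dμ_v. -/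
/-!
Write `∫ xₙ dμ_{vₙ} - ∫ x dμ_v` as `∫ (xₙ - x) dμ_{vₙ}`, which is at most `sup |xₙ - x|` times
the eventually bounded mass `vₙ(T) - vₙ(0)`, plus `∫ x dμ_{vₙ} - ∫ x dμ_v`. For the latter, uniform
continuity of `x` yields a grid, chosen independently of the integrator `w` and of `t`, on which
`∫_{(0,t]} x dμ_w` is within `δ (w(T) - w(0))` of a left-endpoint Riemann–Stieltjes sum. That sum
depends on `w` only through finitely many of its values, so it converges uniformly in `t` as
`vₙ → v`.
-/

open MeasureTheory Filter

/-- The Lebesgue–Stieltjes measure of a monotone continuous function `w : ℝ → ℝ`. -/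
noncomputable def lsMeasure (w : ℝ → ℝ) (hm : Monotone w) (hc : Continuous w) :
    Measure ℝ :=
  StieltjesFunction.measure ⟨w, hm, fun _ => hc.continuousWithinAt⟩

open Set

lemma setIntegral_Ioc_add_setIntegral_Ioc {μ : Measure ℝ} {f : ℝ → ℝ} {a b c : ℝ}
    (hab : a ≤ b) (hbc : b ≤ c) (hf : IntegrableOn f (Ioc a c) μ) :
    (∫ u in Ioc a b, f u ∂μ) + ∫ u in Ioc b c, f u ∂μ = ∫ u in Ioc a c, f u ∂μ := by
  rw [← setIntegral_union (Ioc_disjoint_Ioc_of_le le_rfl) measurableSet_Ioc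
    (hf.mono_set (Ioc_subset_Ioc_right hbc)) (hf.mono_set (Ioc_subset_Ioc_left hab)),
    Ioc_union_Ioc_eq_Ioc hab hbc]

def stieltjesSum (f w : ℝ → ℝ) (p : ℕ → ℝ) (k : ℕ) : ℝ :=
  ∑ i ∈ Finset.range k, f (p i) * (w (p (i + 1)) - w (p i))

namespace StieltjesFunction

variable (F : StieltjesFunction ℝ)

lemma measureReal_Ioc {a b : ℝ} (hab : a ≤ b) : F.measure.real (Ioc a b) = F b - F a := by
  rw [measureReal_def, F.measure_Ioc, ENNReal.toReal_ofReal (sub_nonneg.2 (F.mono hab))]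

lemma abs_setIntegral_Ioc_le {g : ℝ → ℝ} {a b δ : ℝ} (hab : a ≤ b)
    (hg : ∀ u ∈ Ioc a b, |g u| ≤ δ) :
    |∫ u in Ioc a b, g u ∂F.measure| ≤ δ * (F b - F a) := by
  rw [← F.measureReal_Ioc hab]
  exact norm_setIntegral_le_of_norm_le_const (f := g) measure_Ioc_lt_top hg

lemma abs_setIntegral_Ioc_sub_mul_le {f : ℝ → ℝ} {a b c δ : ℝ} (hab : a ≤ b)
    (hf : IntegrableOn f (Ioc a b) F.measure) (hfc : ∀ u ∈ Ioc a b, |f u - c| ≤ δ) :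
    |(∫ u in Ioc a b, f u ∂F.measure) - c * (F b - F a)| ≤ δ * (F b - F a) := by
  have hc : ∫ _ in Ioc a b, c ∂F.measure = c * (F b - F a) := by
    rw [setIntegral_const, F.measureReal_Ioc hab, smul_eq_mul, mul_comm]
  rw [← hc, ← integral_sub hf (integrableOn_const measure_Ioc_lt_top.ne)]
  exact F.abs_setIntegral_Ioc_le hab hfc

lemma abs_setIntegral_Ioc_sub_stieltjesSum_le {f : ℝ → ℝ} {p : ℕ → ℝ} (hp : Monotone p)
    {k : ℕ} {δ : ℝ} (hf : IntegrableOn f (Ioc (p 0) (p k)) F.measure)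
    (hosc : ∀ i < k, ∀ u ∈ Ioc (p i) (p (i + 1)), |f u - f (p i)| ≤ δ) :
    |(∫ u in Ioc (p 0) (p k), f u ∂F.measure) - stieltjesSum f F p k|
      ≤ δ * (F (p k) - F (p 0)) := by
  induction k with
  | zero => simp [stieltjesSum]
  | succ k ih =>
    have h0k : p 0 ≤ p k := hp k.zero_le
    have hkk : p k ≤ p (k + 1) := hp k.le_succ
    have hfirst := ih (hf.mono_set (Ioc_subset_Ioc_right hkk))
      fun i hi => hosc i (hi.trans k.lt_succ_self)
    have hlast := F.abs_setIntegral_Ioc_sub_mul_le hkk (hf.mono_set (Ioc_subset_Ioc_left h0k))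
      (hosc k k.lt_succ_self)
    rw [← setIntegral_Ioc_add_setIntegral_Ioc h0k hkk hf, stieltjesSum,
      Finset.sum_range_succ, ← stieltjesSum]
    calc _ ≤ |(∫ u in Ioc (p 0) (p k), f u ∂F.measure) - stieltjesSum f F p k|
          + |(∫ u in Ioc (p k) (p (k + 1)), f u ∂F.measure)
            - f (p k) * (F (p (k + 1)) - F (p k))| := by
          rw [add_sub_add_comm]; exact abs_add_le _ _
      _ ≤ δ * (F (p (k + 1)) - F (p 0)) := by linarith

end StieltjesFunction

lemma abs_stieltjesSum_sub_stieltjesSum_le {f w w' : ℝ → ℝ} {p : ℕ → ℝ} {k : ℕ} {C η : ℝ}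
    (hf : ∀ i < k, |f (p i)| ≤ C) (hw : ∀ i ≤ k, |w (p i) - w' (p i)| ≤ η) :
    |stieltjesSum f w p k - stieltjesSum f w' p k| ≤ k * (C * (2 * η)) := by
  rw [stieltjesSum, stieltjesSum, ← Finset.sum_sub_distrib]
  calc _ ≤ ∑ i ∈ Finset.range k, |f (p i) * (w (p (i + 1)) - w (p i))
          - f (p i) * (w' (p (i + 1)) - w' (p i))| := Finset.abs_sum_le_sum_abs _ _
    _ ≤ ∑ _i ∈ Finset.range k, C * (2 * η) := Finset.sum_le_sum fun i hi => ?_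
    _ = k * (C * (2 * η)) := by simp
  have hi : i < k := Finset.mem_range.1 hi
  have hη : |(w (p (i + 1)) - w' (p (i + 1))) - (w (p i) - w' (p i))| ≤ 2 * η := by
    have htri := abs_sub (w (p (i + 1)) - w' (p (i + 1))) (w (p i) - w' (p i))
    linarith [hw (i + 1) hi, hw i hi.le]
  calc _ = |f (p i)| * |(w (p (i + 1)) - w' (p (i + 1))) - (w (p i) - w' (p i))| := by
        rw [← abs_mul]; congr 1; ring
    _ ≤ C * (2 * η) := mul_le_mul (hf i hi) hη (abs_nonneg _) ((abs_nonneg _).trans (hf i hi))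

noncomputable def truncGrid (a b : ℝ) (k : ℕ) (t : ℝ) (i : ℕ) : ℝ :=
  min (a + i * ((b - a) / k)) t

section truncGrid

variable {a b t : ℝ} {k : ℕ}

lemma monotone_truncGrid (hab : a ≤ b) : Monotone (truncGrid a b k t) := fun i j hij => by
  unfold truncGrid
  have : 0 ≤ (b - a) / k := div_nonneg (sub_nonneg.2 hab) k.cast_nonneg
  gcongr

lemma truncGrid_zero (hat : a ≤ t) : truncGrid a b k t 0 = a := by
  simp [truncGrid, hat]

lemma truncGrid_self (hk : k ≠ 0) (htb : t ≤ b) : truncGrid a b k t k = t := by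
  have : (k : ℝ) * ((b - a) / k) = b - a := mul_div_cancel₀ _ (Nat.cast_ne_zero.2 hk)
  simp [truncGrid, this, htb]

lemma truncGrid_mem_Icc (hab : a ≤ b) (ht : t ∈ Icc a b) (i : ℕ) :
    truncGrid a b k t i ∈ Icc a b := by
  have : 0 ≤ i * ((b - a) / k) := by positivity
  exact ⟨le_min (by linarith) ht.1, (min_le_right _ _).trans ht.2⟩

lemma truncGrid_succ_sub_le (hab : a ≤ b) (i : ℕ) :
    truncGrid a b k t (i + 1) - truncGrid a b k t i ≤ (b - a) / k := by
  have hd : 0 ≤ (b - a) / k := div_nonneg (sub_nonneg.2 hab) k.cast_nonneg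
  have hmin := abs_min_sub_min_le_max (a + (i + 1) * ((b - a) / k)) t (a + i * ((b - a) / k)) t
  rw [sub_self, abs_zero, show a + (i + 1) * ((b - a) / k) - (a + i * ((b - a) / k))
    = (b - a) / k by ring, abs_of_nonneg hd, max_eq_left hd] at hmin
  unfold truncGrid
  push_cast
  exact (le_abs_self _).trans hmin

end truncGrid

lemma exists_forall_abs_setIntegral_Ioc_sub_stieltjesSum_le {f : ℝ → ℝ} {a b δ : ℝ}
    (hab : a ≤ b) (hf : ContinuousOn f (Icc a b)) (hδ : 0 < δ) :
    ∃ k : ℕ, ∀ (F : StieltjesFunction ℝ), ∀ t ∈ Icc a b,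
      |(∫ u in Ioc a t, f u ∂F.measure) - stieltjesSum f F (truncGrid a b k t) k|
        ≤ δ * (F t - F a) := by
  obtain ⟨δ', hδ', hfδ'⟩ := Metric.uniformContinuousOn_iff.1
    (isCompact_Icc.uniformContinuousOn_of_continuous hf) δ hδ
  obtain ⟨k, hk⟩ := exists_nat_gt ((b - a) / δ')
  have hk0 : (0 : ℝ) < k := (div_nonneg (sub_nonneg.2 hab) hδ'.le).trans_lt hk
  have hmesh : (b - a) / k < δ' := by
    rw [div_lt_iff₀ hk0]; rw [div_lt_iff₀ hδ'] at hk; linarith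
  refine ⟨k, fun F t ht => ?_⟩
  set p := truncGrid a b k t
  have hp0 : p 0 = a := truncGrid_zero ht.1
  have hpk : p k = t := truncGrid_self (Nat.cast_pos.1 hk0).ne' ht.2
  have hosc : ∀ i < k, ∀ u ∈ Ioc (p i) (p (i + 1)), |f u - f (p i)| ≤ δ := by
    intro i _ u hu
    have hpi := truncGrid_mem_Icc (k := k) hab ht i
    have hu_mem : u ∈ Icc a b :=
      ⟨hpi.1.trans hu.1.le, hu.2.trans (truncGrid_mem_Icc hab ht (i + 1)).2⟩
    have hdist : dist u (p i) < δ' := by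
      rw [Real.dist_eq, abs_of_pos (sub_pos.2 hu.1)]
      linarith [truncGrid_succ_sub_le (k := k) (t := t) hab i, hu.2]
    exact (hfδ' u hu_mem (p i) hpi hdist).le
  have hint : IntegrableOn f (Ioc (p 0) (p k)) F.measure := by
    rw [hp0, hpk]
    exact (hf.integrableOn_compact isCompact_Icc).mono_set
      (Ioc_subset_Icc_self.trans (Icc_subset_Icc_right ht.2))
  have key := F.abs_setIntegral_Ioc_sub_stieltjesSum_le (p := p) (monotone_truncGrid hab) hint hosc
  rwa [hp0, hpk] at key

lemma TendstoUniformlyOn.eventually_sub_lt_sub_add_one {ι α : Type*} {l : Filter ι}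
    {F : ι → α → ℝ} {F₀ : α → ℝ} {s : Set α} {a b : α} (h : TendstoUniformlyOn F F₀ l s)
    (ha : a ∈ s) (hb : b ∈ s) : ∀ᶠ n in l, F n b - F n a < F₀ b - F₀ a + 1 := by
  filter_upwards [Metric.tendstoUniformlyOn_iff.1 h (1 / 2) one_half_pos] with n hn
  have hna := hn a ha
  have hnb := hn b hb
  rw [Real.dist_eq, abs_lt] at hna hnb
  linarith

theorem tendstoUniformlyOn_setIntegral_Ioc_stieltjesFunction_measure {ι : Type*} {l : Filter ι}
    {a b : ℝ} (hab : a ≤ b) {f : ℝ → ℝ} (hf : ContinuousOn f (Icc a b))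
    {F : ι → StieltjesFunction ℝ} {F₀ : StieltjesFunction ℝ}
    (hF : TendstoUniformlyOn (fun n => ⇑(F n)) F₀ l (Icc a b)) :
    TendstoUniformlyOn (fun n t => ∫ u in Ioc a t, f u ∂(F n).measure)
      (fun t => ∫ u in Ioc a t, f u ∂F₀.measure) l (Icc a b) := by
  rw [Metric.tendstoUniformlyOn_iff]
  intro ε hε
  have ha : a ∈ Icc a b := ⟨le_rfl, hab⟩
  have hb : b ∈ Icc a b := ⟨hab, le_rfl⟩
  set M := F₀ b - F₀ a + 1
  have hM : 0 < M := by linarith [F₀.mono hab]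
  set δ := ε / (4 * M)
  have hδM : δ * M = ε / 4 := by simp only [δ]; field_simp
  obtain ⟨k, hk⟩ := exists_forall_abs_setIntegral_Ioc_sub_stieltjesSum_le hab hf
    (show 0 < δ by positivity)
  obtain ⟨C, hC⟩ := isCompact_Icc.exists_bound_of_continuousOn hf
  have hC0 : 0 ≤ C := (norm_nonneg _).trans (hC a ha)
  set η := ε / (8 * (k * C + 1))
  have hη : 0 < η := by positivity
  have hkCη : k * (C * (2 * η)) ≤ ε / 4 := by
    have h2η : 2 * η * (k * C + 1) = ε / 4 := by simp only [η]; field_simp; ring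
    nlinarith
  filter_upwards [hF.eventually_sub_lt_sub_add_one ha hb,
    Metric.tendstoUniformlyOn_iff.1 hF η hη] with n hvar hclose t ht
  have happrox₀ := hk F₀ t ht
  have happroxₙ := hk (F n) t ht
  have hsum := abs_stieltjesSum_sub_stieltjesSum_le (f := f) (w := F₀) (w' := F n)
    (p := truncGrid a b k t) (k := k) (C := C) (η := η)
    (fun i _ => by simpa only [Real.norm_eq_abs] using hC _ (truncGrid_mem_Icc hab ht i))
    (fun i _ => by simpa only [Real.dist_eq] using (hclose _ (truncGrid_mem_Icc hab ht i)).le)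
  have hvar₀ : δ * (F₀ t - F₀ a) ≤ ε / 4 := by
    rw [← hδM]; gcongr; linarith [F₀.mono ht.2]
  have hvarₙ : δ * (F n t - F n a) ≤ ε / 4 := by
    rw [← hδM]; gcongr; linarith [(F n).mono ht.2]
  rw [Real.dist_eq, abs_lt]
  rw [abs_le] at happrox₀ happroxₙ hsum
  constructor <;> linarith

theorem tendstoUniformlyOn_setIntegral_Ioc_sub_setIntegral_Ioc {ι : Type*} {l : Filter ι}
    {a b : ℝ} (hab : a ≤ b) {f : ι → ℝ → ℝ} {f₀ : ℝ → ℝ}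
    (hf : ∀ n, ContinuousOn (f n) (Icc a b)) (hf₀ : ContinuousOn f₀ (Icc a b))
    (hf_unif : TendstoUniformlyOn f f₀ l (Icc a b)) {F : ι → StieltjesFunction ℝ} {F₀ : ℝ → ℝ}
    (hF : TendstoUniformlyOn (fun n => ⇑(F n)) F₀ l (Icc a b)) :
    TendstoUniformlyOn (fun n t => (∫ u in Ioc a t, f n u ∂(F n).measure)
      - ∫ u in Ioc a t, f₀ u ∂(F n).measure) 0 l (Icc a b) := by
  rw [Metric.tendstoUniformlyOn_iff]
  intro ε hε
  have ha : a ∈ Icc a b := ⟨le_rfl, hab⟩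
  have hb : b ∈ Icc a b := ⟨hab, le_rfl⟩
  set M := |F₀ b - F₀ a| + 1
  have hM : 0 < M := by positivity
  filter_upwards [hF.eventually_sub_lt_sub_add_one ha hb,
    Metric.tendstoUniformlyOn_iff.1 hf_unif (ε / (2 * M)) (by positivity)] with n hvar hclose t ht
  have hsub : Ioc a t ⊆ Icc a b := Ioc_subset_Icc_self.trans (Icc_subset_Icc_right ht.2)
  have hint {g : ℝ → ℝ} (hg : ContinuousOn g (Icc a b)) : IntegrableOn g (Ioc a t) (F n).measure :=
    (hg.integrableOn_compact isCompact_Icc).mono_set hsub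
  rw [Pi.zero_apply, dist_zero_left, Real.norm_eq_abs, ← integral_sub (hint (hf n)) (hint hf₀)]
  calc _ ≤ ε / (2 * M) * (F n t - F n a) := (F n).abs_setIntegral_Ioc_le ht.1 fun u hu => by
        simpa only [Real.dist_eq, abs_sub_comm] using (hclose u (hsub hu)).le
    _ ≤ ε / (2 * M) * M := by
        gcongr
        linarith [(F n).mono ht.2, le_abs_self (F₀ b - F₀ a)]
    _ = ε / 2 := by field_simp
    _ < ε := half_lt_self hε

theorem stmt_13_general (T : ℝ) (hT : 0 < T) (x : ℕ → ℝ → ℝ) (x₀ : ℝ → ℝ)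
    (hx_cont : ∀ n, ContinuousOn (x n) (Set.Icc 0 T))
    (hx₀_cont : ContinuousOn x₀ (Set.Icc 0 T))
    (hx_unif : TendstoUniformlyOn x x₀ atTop (Set.Icc 0 T))
    (v : ℕ → ℝ → ℝ) (v₀ : ℝ → ℝ)
    (hv_mono : ∀ n, Monotone (v n)) (hv₀_mono : Monotone v₀)
    (hv_cont : ∀ n, Continuous (v n)) (hv₀_cont : Continuous v₀)
    (hv_unif : TendstoUniformlyOn v v₀ atTop (Set.Icc 0 T)) :
    TendstoUniformlyOn
      (fun n t => ∫ u in Set.Ioc 0 t, x n u ∂(lsMeasure (v n) (hv_mono n) (hv_cont n)))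
      (fun t => ∫ u in Set.Ioc 0 t, x₀ u ∂(lsMeasure v₀ hv₀_mono hv₀_cont))
      atTop (Set.Icc 0 T) := by
  let F : ℕ → StieltjesFunction ℝ := fun n =>
    ⟨v n, hv_mono n, fun _ => (hv_cont n).continuousWithinAt⟩
  let F₀ : StieltjesFunction ℝ := ⟨v₀, hv₀_mono, fun _ => hv₀_cont.continuousWithinAt⟩
  have hF : TendstoUniformlyOn (fun n => ⇑(F n)) F₀ atTop (Icc 0 T) := hv_unif
  have hlim := tendstoUniformlyOn_setIntegral_Ioc_stieltjesFunction_measure hT.le hx₀_cont hF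
  have hdiff := tendstoUniformlyOn_setIntegral_Ioc_sub_setIntegral_Ioc hT.le hx_cont hx₀_cont
    hx_unif hF
  refine ((hlim.add hdiff).congr (Eventually.of_forall fun n t _ => ?_)).congr_right fun t _ => ?_
  · exact add_sub_cancel _ _
  · exact add_zero _

/-- Continuity of the map `(x,v) ↦ ∫₀^· x dv`: if `xₙ → x` uniformly on `[0,T]`
(continuous functions) and `vₙ → v` uniformly on `[0,T]` (continuous nondecreasing
functions, extended constantly outside `[0,T]`), then
`t ↦ ∫_{(0,t]} xₙ dμ_{vₙ}` converges uniformly on `[0,T]` to `t ↦ ∫_{(0,t]} x dμ_v`. -/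
theorem stmt_13 (T : ℝ) (hT : 0 < T) (x : ℕ → ℝ → ℝ) (x₀ : ℝ → ℝ)
    (hx_cont : ∀ n, ContinuousOn (x n) (Set.Icc 0 T))
    (hx₀_cont : ContinuousOn x₀ (Set.Icc 0 T))
    (hx_unif : TendstoUniformlyOn x x₀ atTop (Set.Icc 0 T))
    (v : ℕ → ℝ → ℝ) (v₀ : ℝ → ℝ)
    (hv_mono : ∀ n, Monotone (v n)) (hv₀_mono : Monotone v₀)
    (hv_cont : ∀ n, Continuous (v n)) (hv₀_cont : Continuous v₀)
    (hv_const : ∀ n, (∀ t ≤ (0:ℝ), v n t = v n 0) ∧ ∀ t ≥ T, v n t = v n T)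
    (hv₀_const : (∀ t ≤ (0:ℝ), v₀ t = v₀ 0) ∧ ∀ t ≥ T, v₀ t = v₀ T)
    (hv_unif : TendstoUniformlyOn v v₀ atTop (Set.Icc 0 T)) :
    TendstoUniformlyOn
      (fun n t => ∫ u in Set.Ioc 0 t, x n u ∂(lsMeasure (v n) (hv_mono n) (hv_cont n)))
      (fun t => ∫ u in Set.Ioc 0 t, x₀ u ∂(lsMeasure v₀ hv₀_mono hv₀_cont))
      atTop (Set.Icc 0 T) :=
  stmt_13_general T hT x x₀ hx_cont hx₀_cont hx_unif v v₀ hv_mono hv₀_mono hv_cont hv₀_cont hv_unif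
end
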